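/- Let D₁, D₂ be locally nilpotent derivations of K[x,y] that are linearly independent over K[x,y] and commute: [D₁, D₂] = 0. Then there exists a coordinate pair (a, c) in K[x,y] with D₁ = D_a and D₂ = D_c. -/

import Mathlib

open MvPolynomial

/-- The Jacobian derivation `D_h : p ↦ det J(h,p)` of `K[x,y]`. -/
noncomputable def jacDer {K : Type*} [CommRing K] (h : MvPolynomial (Fin 2) K) :
    Derivation K (MvPolynomial (Fin 2) K) (MvPolynomial (Fin 2) K) :=
  (pderiv 0 h) • (pderiv 1) - (pderiv 1 h) • (pderiv 0)

/-!
Put `Δ = D₁x·D₂y - D₁y·D₂x`. Independence of `D₁, D₂` gives `Δ ≠ 0`, and `[D₁, D₂] = 0` gives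
`Dᵢ Δ = (div Dᵢ) Δ`. A locally nilpotent `D` on a domain of characteristic zero admits no
`D Δ = w Δ` with `w, Δ ≠ 0`: by Leibniz, the top nonvanishing iterates of `w` and `Δ` would
multiply to a nonzero iterate of `D Δ` beyond the nilpotency index of `Δ`. So both divergences
vanish, and the Poincaré lemma writes `D₁ = D_a`, `D₂ = D_c`. Then `Δ = D_a c` is killed by
`D₁` and `D₂`, whose common kernel is `K` since `Δ ≠ 0`; so `Δ` is a nonzero constant `λ`.
Thus `c/λ` is a slice of `D_a` and `-a/λ` a slice of `D_c` on `ker D_a`, and the slice argument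
gives first `ker D_a = K[a]`, then `K[x,y] = K[a,c]`.
-/

namespace Derivation

section LocallyNilpotent

variable {R A : Type*} [CommSemiring R] [CommRing A] [Algebra R A]

def IsLocallyNilpotent (D : Derivation R A A) : Prop :=
  ∀ a, ∃ n, (⇑D)^[n] a = 0

open Finset in
theorem iterate_apply_mul (D : Derivation R A A) (n : ℕ) (a b : A) :
    (⇑D)^[n] (a * b) =
      ∑ ij ∈ antidiagonal n, n.choose ij.1 • ((⇑D)^[ij.1] a * (⇑D)^[ij.2] b) := by
  induction n with
  | zero => simp
  | succ n ih =>
    rw [sum_antidiagonal_choose_succ_nsmul (M := A) (fun i j => (⇑D)^[i] a * (⇑D)^[j] b) n,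
      ← sum_add_distrib, Function.iterate_succ_apply', ih, map_sum]
    refine sum_congr rfl fun ⟨i, j⟩ hij => ?_
    rw [n.choose_symm_of_eq_add (mem_antidiagonal.1 hij).symm, map_nsmul]
    simp only [leibniz, smul_eq_mul, Function.iterate_succ_apply', nsmul_eq_mul]
    ring

namespace IsLocallyNilpotent

variable {D : Derivation R A A}

theorem exists_iterate_ne_zero (hD : D.IsLocallyNilpotent) {x : A} (hx : x ≠ 0) :
    ∃ k, (⇑D)^[k] x ≠ 0 ∧ ∀ m, k < m → (⇑D)^[m] x = 0 := by
  classical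
  have hex := hD x
  have hpos : Nat.find hex ≠ 0 := fun h => hx (by simpa [h] using Nat.find_spec hex)
  refine ⟨Nat.find hex - 1, Nat.find_min hex (by omega), fun m hm => ?_⟩
  obtain ⟨k, rfl⟩ := Nat.exists_eq_add_of_le (show Nat.find hex ≤ m by omega)
  rw [add_comm, Function.iterate_add_apply, Nat.find_spec hex, iterate_map_zero]

theorem eq_zero_of_apply_eq_mul [IsDomain A] [CharZero A] (hD : D.IsLocallyNilpotent)
    {x w : A} (hx : x ≠ 0) (h : D x = w * x) : w = 0 := by
  by_contra hw
  obtain ⟨p, hp, hp'⟩ := hD.exists_iterate_ne_zero hw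
  obtain ⟨q, hq, hq'⟩ := hD.exists_iterate_ne_zero hx
  have hsum : (⇑D)^[p + q] (w * x) = (p + q).choose p • ((⇑D)^[p] w * (⇑D)^[q] x) := by
    rw [iterate_apply_mul, Finset.sum_eq_single_of_mem (p, q) (by simp)]
    rintro ⟨i, j⟩ hij hne
    rw [Finset.HasAntidiagonal.mem_antidiagonal] at hij
    dsimp only
    rcases lt_or_gt_of_ne (show i ≠ p by rintro rfl; exact hne (Prod.ext rfl (by omega)))
      with hi | hi
    · rw [hq' j (by omega), mul_zero, smul_zero]
    · rw [hp' i hi, zero_mul, smul_zero]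
  have hne : (⇑D)^[p + q] (w * x) ≠ 0 := by
    rw [hsum, nsmul_eq_mul]
    exact mul_ne_zero (Nat.cast_ne_zero.2 (Nat.choose_pos (by omega)).ne') (mul_ne_zero hp hq)
  exact hne (by rw [← h, ← Function.iterate_succ_apply, hq' _ (by omega)])

end IsLocallyNilpotent

end LocallyNilpotent

theorem apply_comm_of_lie_eq_zero {R A : Type*} [CommRing R] [CommRing A] [Algebra R A]
    {D E : Derivation R A A} (h : ⁅D, E⁆ = 0) (a : A) : D (E a) = E (D a) :=
  sub_eq_zero.1 (by rw [← commutator_apply, h, zero_apply])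

end Derivation

namespace MvPolynomial

variable {σ : Type*}

theorem pderiv_comm {R : Type*} [CommRing R] (i j : σ) (p : MvPolynomial σ R) :
    pderiv i (pderiv j p) = pderiv j (pderiv i p) := by
  have h : ⁅(pderiv i : Derivation R (MvPolynomial σ R) _), pderiv j⁆ = 0 :=
    derivation_ext fun k => by
      classical
      rw [Derivation.commutator_apply]
      simp [pderiv_X, Pi.single_apply, apply_ite (pderiv _)]
  exact Derivation.apply_comm_of_lie_eq_zero h p

theorem derivation_aeval {R A : Type*} [CommSemiring R] [CommRing A] [Algebra R A] [Fintype σ]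
    (D : Derivation R A A) (g : σ → A) (p : MvPolynomial σ R) :
    D (aeval g p) = ∑ i, aeval g (pderiv i p) * D (g i) := by
  classical
  induction p using MvPolynomial.induction_on with
  | C a => simp
  | add p q hp hq => simp only [map_add, hp, hq, add_mul, Finset.sum_add_distrib]
  | mul_X p j hp =>
    simp only [map_mul, aeval_X, Derivation.leibniz, hp, pderiv_X, smul_eq_mul, Finset.mul_sum,
      map_add, add_mul, Finset.sum_add_distrib, Pi.single_apply, mul_ite, mul_one, mul_zero,
      apply_ite (aeval g), map_zero, ite_mul, zero_mul, Finset.sum_ite_eq, Finset.mem_univ,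
      if_true, mul_assoc]

theorem exists_pderiv_eq {K : Type*} [Field K] [CharZero K] (i : σ) (p : MvPolynomial σ K) :
    ∃ q, pderiv i q = p := by
  classical
  induction p using MvPolynomial.induction_on' with
  | monomial m r =>
    refine ⟨monomial (m + Finsupp.single i 1) (r / (m i + 1)), ?_⟩
    rw [pderiv_monomial, add_tsub_cancel_right]
    congr 1
    simp only [Finsupp.coe_add, Pi.add_apply, Finsupp.single_eq_same, Nat.cast_add, Nat.cast_one]
    field_simp
  | add p q hp hq =>
    obtain ⟨p', rfl⟩ := hp
    obtain ⟨q', rfl⟩ := hq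
    exact ⟨p' + q', map_add _ _ _⟩

variable {R : Type*} [CommSemiring R] [NoZeroDivisors R] [CharZero R]

theorem notMem_vars_of_pderiv_eq_zero {i : σ} {p : MvPolynomial σ R} (h : pderiv i p = 0) :
    i ∉ p.vars := by
  classical
  intro hi
  obtain ⟨m, hm, hmi⟩ := (mem_vars_iff_mem_support i).1 hi
  have := coeff_pderiv (i := i) p (m - Finsupp.single i 1)
  rw [h, coeff_zero, tsub_add_cancel_of_le (by simpa [Nat.one_le_iff_ne_zero] using hmi)] at this
  exact mem_support_iff.1 hm ((mul_eq_zero.1 this.symm).resolve_right (Nat.cast_add_one_ne_zero _))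

theorem mem_bot_of_pderiv_eq_zero {p : MvPolynomial σ R} (h : ∀ i, pderiv i p = 0) :
    p ∈ (⊥ : Subalgebra R (MvPolynomial σ R)) := by
  rw [← supported_empty, mem_supported]
  exact fun i hi => notMem_vars_of_pderiv_eq_zero (h i) hi

end MvPolynomial

theorem Derivation.exists_mem_adjoin_apply_eq {σ K A : Type*} [Fintype σ] [Field K]
    [CharZero K] [CommRing A] [Algebra K A] (D : Derivation K A A) {g : σ → A} {j : σ} {μ : K}
    (hμ : μ ≠ 0) (hj : D (g j) = algebraMap K A μ) (hg : ∀ i ≠ j, D (g i) = 0) {z : A}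
    (hz : z ∈ Algebra.adjoin K (Set.range g)) :
    ∃ y ∈ Algebra.adjoin K (Set.range g), D y = z := by
  rw [Algebra.adjoin_range_eq_range_aeval] at hz ⊢
  obtain ⟨P, rfl⟩ := hz
  obtain ⟨Q, hQ⟩ := exists_pderiv_eq j (C μ⁻¹ * P)
  refine ⟨aeval g Q, ⟨Q, rfl⟩, ?_⟩
  rw [derivation_aeval, Finset.sum_eq_single j (fun i _ hi => by rw [hg i hi, mul_zero])
    (by simp), hQ, hj, map_mul, aeval_C, mul_right_comm, ← map_mul, inv_mul_cancel₀ hμ, map_one,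
    one_mul]
  rfl

theorem AddSubgroup.mem_of_iterate_apply_eq_zero {M : Type*} [AddCommGroup M] {f : M →+ M}
    {S T : AddSubgroup M} (hST : S ≤ T) (hT : T ≤ T.comap f) (hS : S ≤ S.map f)
    (hker : T ⊓ f.ker ≤ S) {n : ℕ} {x : M} (hx : x ∈ T) (hn : f^[n] x = 0) : x ∈ S := by
  induction n generalizing x with
  | zero => exact (show x = 0 from hn) ▸ S.zero_mem
  | succ n ih =>
    obtain ⟨y, hy, hfy⟩ := hS (ih (hT hx) hn)
    have hxy : x - y ∈ S := hker ⟨T.sub_mem hx (hST hy), by simp [hfy]⟩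
    simpa using S.add_mem hxy hy

section Plane

variable {R : Type*} [CommRing R]

noncomputable def derivDet (D E : Derivation R (MvPolynomial (Fin 2) R) (MvPolynomial (Fin 2) R)) :
    MvPolynomial (Fin 2) R :=
  D (X 0) * E (X 1) - D (X 1) * E (X 0)

noncomputable def divergence (D : Derivation R (MvPolynomial (Fin 2) R) (MvPolynomial (Fin 2) R)) :
    MvPolynomial (Fin 2) R :=
  pderiv 0 (D (X 0)) + pderiv 1 (D (X 1))

theorem derivation_apply_eq_pderiv
    (D : Derivation R (MvPolynomial (Fin 2) R) (MvPolynomial (Fin 2) R))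
    (p : MvPolynomial (Fin 2) R) : D p = pderiv 0 p * D (X 0) + pderiv 1 p * D (X 1) := by
  simpa [Fin.sum_univ_two] using derivation_aeval D X p

variable {D E : Derivation R (MvPolynomial (Fin 2) R) (MvPolynomial (Fin 2) R)}

theorem derivDet_comm : derivDet E D = -derivDet D E := by
  rw [derivDet, derivDet]
  ring

theorem derivDet_ne_zero [Nontrivial R]
    (hind : ∀ r₁ r₂ : MvPolynomial (Fin 2) R, r₁ • D + r₂ • E = 0 → r₁ = 0 ∧ r₂ = 0) :
    derivDet D E ≠ 0 := by
  have key (r₁ r₂ : MvPolynomial (Fin 2) R) (h₀ : r₁ * D (X 0) + r₂ * E (X 0) = 0)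
      (h₁ : r₁ * D (X 1) + r₂ * E (X 1) = 0) : r₁ = 0 ∧ r₂ = 0 :=
    hind r₁ r₂ (derivation_ext (Fin.forall_fin_two.2 (by simpa using ⟨h₀, h₁⟩)))
  intro hΔ
  rw [derivDet] at hΔ
  obtain ⟨-, hD₀⟩ := key (E (X 0)) (-D (X 0)) (by ring) (by linear_combination -hΔ)
  obtain ⟨-, hD₁⟩ := key (E (X 1)) (-D (X 1)) (by linear_combination hΔ) (by ring)
  rw [neg_eq_zero] at hD₀ hD₁
  exact one_ne_zero (key 1 0 (by simp [hD₀]) (by simp [hD₁])).1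

theorem apply_derivDet_left (h : ⁅D, E⁆ = 0) : D (derivDet D E) = divergence D * derivDet D E := by
  have hDE := Derivation.apply_comm_of_lie_eq_zero h
  rw [derivDet, divergence, map_sub, D.leibniz, D.leibniz, smul_eq_mul, smul_eq_mul, smul_eq_mul,
    smul_eq_mul, hDE, hDE, derivation_apply_eq_pderiv D (D (X 0)),
    derivation_apply_eq_pderiv D (D (X 1)), derivation_apply_eq_pderiv E (D (X 0)),
    derivation_apply_eq_pderiv E (D (X 1))]
  ring

theorem apply_derivDet_right (h : ⁅D, E⁆ = 0) : E (derivDet D E) = divergence E * derivDet D E := by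
  have h' : ⁅E, D⁆ = 0 := by rw [← lie_skew, h, neg_zero]
  rw [← neg_neg (derivDet D E), ← derivDet_comm, map_neg, apply_derivDet_left h', mul_neg]

theorem mem_bot_of_derivDet_ne_zero [IsDomain R] [CharZero R] (hΔ : derivDet D E ≠ 0)
    {p : MvPolynomial (Fin 2) R} (hD : D p = 0) (hE : E p = 0) :
    p ∈ (⊥ : Subalgebra R (MvPolynomial (Fin 2) R)) := by
  rw [derivation_apply_eq_pderiv] at hD hE
  refine mem_bot_of_pderiv_eq_zero (Fin.forall_fin_two.2 ⟨?_, ?_⟩)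
  · refine (mul_eq_zero.1 ?_).resolve_left hΔ
    rw [derivDet]
    linear_combination E (X 1) * hD - D (X 1) * hE
  · refine (mul_eq_zero.1 ?_).resolve_left hΔ
    rw [derivDet]
    linear_combination D (X 0) * hE - E (X 0) * hD

theorem jacDer_apply (a p : MvPolynomial (Fin 2) R) :
    jacDer a p = pderiv 0 a * pderiv 1 p - pderiv 1 a * pderiv 0 p := by
  simp [jacDer]

theorem jacDer_self (a : MvPolynomial (Fin 2) R) : jacDer a a = 0 := by
  rw [jacDer_apply]
  ring

theorem jacDer_comm (a c : MvPolynomial (Fin 2) R) : jacDer c a = -jacDer a c := by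
  rw [jacDer_apply, jacDer_apply]
  ring

theorem derivDet_jacDer (a c : MvPolynomial (Fin 2) R) :
    derivDet (jacDer a) (jacDer c) = jacDer a c := by
  simp only [derivDet, jacDer_apply, pderiv_X_self, pderiv_X_of_ne (Fin.zero_ne_one),
    pderiv_X_of_ne (Fin.zero_ne_one).symm]
  ring

end Plane

section Field

variable {K : Type*} [Field K] [CharZero K]

theorem mem_adjoin_X_one_of_pderiv_zero_eq_zero {p : MvPolynomial (Fin 2) K}
    (h : pderiv 0 p = 0) : p ∈ Algebra.adjoin K (Set.range ![(X 1 : MvPolynomial (Fin 2) K)]) := by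
  rw [Matrix.range_cons_empty, ← Set.image_singleton, ← supported_eq_adjoin_X, mem_supported]
  intro i hi
  fin_cases i
  · exact absurd hi (notMem_vars_of_pderiv_eq_zero h)
  · rfl

theorem exists_pderiv_zero_eq_and_pderiv_one_eq {f g : MvPolynomial (Fin 2) K}
    (h : pderiv 0 f + pderiv 1 g = 0) : ∃ a, pderiv 0 a = g ∧ pderiv 1 a = -f := by
  obtain ⟨a, ha⟩ := exists_pderiv_eq 0 g
  have hr : pderiv 0 (-f - pderiv 1 a) = 0 := by
    rw [map_sub, map_neg, pderiv_comm, ha]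
    linear_combination -h
  obtain ⟨b, hb, hb₁⟩ := (pderiv 1).exists_mem_adjoin_apply_eq one_ne_zero (j := 0)
    (by simp) (fun i hi => absurd (Subsingleton.elim i 0) hi)
    (mem_adjoin_X_one_of_pderiv_zero_eq_zero hr)
  have hb₀ : pderiv 0 b = 0 :=
    Derivation.eqOn_adjoin (D2 := 0) (by simp [pderiv_X_of_ne (Fin.zero_ne_one).symm]) hb
  exact ⟨a + b, by rw [map_add, ha, hb₀, add_zero], by rw [map_add, hb₁]; ring⟩

theorem exists_eq_jacDer_of_divergence_eq_zero
    {D : Derivation K (MvPolynomial (Fin 2) K) (MvPolynomial (Fin 2) K)} (h : divergence D = 0) :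
    ∃ a, D = jacDer a := by
  obtain ⟨a, ha₀, ha₁⟩ := exists_pderiv_zero_eq_and_pderiv_one_eq h
  refine ⟨a, derivation_ext (Fin.forall_fin_two.2 ⟨?_, ?_⟩)⟩ <;>
    simp [jacDer_apply, ha₀, ha₁, pderiv_X_of_ne (Fin.zero_ne_one),
      pderiv_X_of_ne (Fin.zero_ne_one).symm]

variable {a c : MvPolynomial (Fin 2) K} {μ : K}

theorem mem_adjoin_of_jacDer_eq_zero (hc : (jacDer c).IsLocallyNilpotent)
    (hcomm : ⁅jacDer a, jacDer c⁆ = 0) (hac : jacDer a c = algebraMap K _ μ) (hμ : μ ≠ 0)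
    {p : MvPolynomial (Fin 2) K} (hp : jacDer a p = 0) : p ∈ Algebra.adjoin K {a} := by
  have hca : jacDer c (![a] 0) = algebraMap K _ (-μ) := by simp [jacDer_comm, hac]
  obtain ⟨n, hn⟩ := hc p
  refine AddSubgroup.mem_of_iterate_apply_eq_zero
    (f := (jacDer c : MvPolynomial (Fin 2) K →+ MvPolynomial (Fin 2) K))
    (S := (Algebra.adjoin K {a}).toSubring.toAddSubgroup)
    (T := AddMonoidHom.ker (jacDer a : MvPolynomial (Fin 2) K →+ MvPolynomial (Fin 2) K))
    ?_ ?_ ?_ ?_ hp hn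
  · intro q hq
    simp only [Subring.mem_toAddSubgroup, Subalgebra.mem_toSubring, AddMonoidHom.mem_ker,
      AddMonoidHom.coe_coe] at hq ⊢
    exact Derivation.eqOn_adjoin (D1 := jacDer a) (D2 := 0) (by simp [jacDer_self]) hq
  · intro q hq
    simp only [AddMonoidHom.mem_ker, AddSubgroup.mem_comap, AddMonoidHom.coe_coe] at hq ⊢
    rw [Derivation.apply_comm_of_lie_eq_zero hcomm, hq, map_zero]
  · intro q hq
    simp only [Subring.mem_toAddSubgroup, Subalgebra.mem_toSubring] at hq
    have := (jacDer c).exists_mem_adjoin_apply_eq (neg_ne_zero.2 hμ) hca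
      (fun i hi => absurd (Subsingleton.elim i 0) hi) (z := q) (by rwa [Matrix.range_cons_empty])
    rw [Matrix.range_cons_empty] at this
    simpa using this
  · intro q hq
    have hΔ : derivDet (jacDer a) (jacDer c) ≠ 0 := by
      rw [derivDet_jacDer, hac]
      exact (map_ne_zero _).2 hμ
    simp only [Subring.mem_toAddSubgroup, Subalgebra.mem_toSubring]
    exact (bot_le : ⊥ ≤ Algebra.adjoin K {a}) (mem_bot_of_derivDet_ne_zero hΔ hq.1 hq.2)

theorem adjoin_eq_top_of_jacDer_eq_algebraMap (ha : (jacDer a).IsLocallyNilpotent)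
    (hc : (jacDer c).IsLocallyNilpotent) (hcomm : ⁅jacDer a, jacDer c⁆ = 0)
    (hac : jacDer a c = algebraMap K _ μ) (hμ : μ ≠ 0) : Algebra.adjoin K {a, c} = ⊤ := by
  refine eq_top_iff.2 fun p _ => ?_
  obtain ⟨n, hn⟩ := ha p
  have hac' : jacDer a (![a, c] 1) = algebraMap K _ μ := hac
  refine AddSubgroup.mem_of_iterate_apply_eq_zero
    (f := (jacDer a : MvPolynomial (Fin 2) K →+ MvPolynomial (Fin 2) K))
    (S := (Algebra.adjoin K {a, c}).toSubring.toAddSubgroup) (T := ⊤)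
    le_top (fun _ _ => trivial) ?_ ?_ trivial hn
  · intro q hq
    simp only [Subring.mem_toAddSubgroup, Subalgebra.mem_toSubring] at hq
    have := (jacDer a).exists_mem_adjoin_apply_eq hμ hac'
      (Fin.forall_fin_two.2 ⟨fun _ => jacDer_self a, fun h => absurd rfl h⟩) (z := q)
      (by rwa [Matrix.range_cons_cons_empty])
    rw [Matrix.range_cons_cons_empty] at this
    simpa using this
  · rintro q ⟨-, hq⟩
    simp only [Subring.mem_toAddSubgroup, Subalgebra.mem_toSubring]
    exact Algebra.adjoin_mono (by simp) (mem_adjoin_of_jacDer_eq_zero hc hcomm hac hμ hq)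

end Field

theorem lnd_commuting_independent_general
    (K : Type*) [Field K] [CharZero K]
    (D₁ D₂ : Derivation K (MvPolynomial (Fin 2) K) (MvPolynomial (Fin 2) K))
    (hln₁ : ∀ a : MvPolynomial (Fin 2) K, ∃ n : ℕ, (fun x => D₁ x)^[n] a = 0)
    (hln₂ : ∀ a : MvPolynomial (Fin 2) K, ∃ n : ℕ, (fun x => D₂ x)^[n] a = 0)
    (hind : ∀ r₁ r₂ : MvPolynomial (Fin 2) K, r₁ • D₁ + r₂ • D₂ = 0 → r₁ = 0 ∧ r₂ = 0)
    (hcomm : ⁅D₁, D₂⁆ = 0) :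
    ∃ a c : MvPolynomial (Fin 2) K,
      Algebra.adjoin K ({a, c} : Set (MvPolynomial (Fin 2) K)) = ⊤ ∧
      D₁ = jacDer a ∧ D₂ = jacDer c := by
  have hΔ : derivDet D₁ D₂ ≠ 0 := derivDet_ne_zero hind
  have hD₁Δ := apply_derivDet_left hcomm
  have hD₂Δ := apply_derivDet_right hcomm
  have hdiv₁ : divergence D₁ = 0 :=
    Derivation.IsLocallyNilpotent.eq_zero_of_apply_eq_mul hln₁ hΔ hD₁Δ
  have hdiv₂ : divergence D₂ = 0 :=
    Derivation.IsLocallyNilpotent.eq_zero_of_apply_eq_mul hln₂ hΔ hD₂Δ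
  have hconst : derivDet D₁ D₂ ∈ (⊥ : Subalgebra K _) := mem_bot_of_derivDet_ne_zero hΔ
    (by rw [hD₁Δ, hdiv₁, zero_mul]) (by rw [hD₂Δ, hdiv₂, zero_mul])
  obtain ⟨a, rfl⟩ := exists_eq_jacDer_of_divergence_eq_zero hdiv₁
  obtain ⟨c, rfl⟩ := exists_eq_jacDer_of_divergence_eq_zero hdiv₂
  rw [derivDet_jacDer] at hΔ hconst
  obtain ⟨μ, hμ⟩ := Algebra.mem_bot.1 hconst
  refine ⟨a, c, adjoin_eq_top_of_jacDer_eq_algebraMap hln₁ hln₂ hcomm hμ.symm ?_, rfl, rfl⟩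
  rintro rfl
  exact hΔ (by rw [← hμ, map_zero])

/-- Commuting locally nilpotent derivations of `K[x,y]` that are linearly independent over
`K[x,y]` are `D_a, D_c` for a coordinate pair `(a,c)`. -/
theorem lnd_commuting_independent
    (K : Type*) [Field K] [IsAlgClosed K] [CharZero K]
    (D₁ D₂ : Derivation K (MvPolynomial (Fin 2) K) (MvPolynomial (Fin 2) K))
    (hln₁ : ∀ a : MvPolynomial (Fin 2) K, ∃ n : ℕ, (fun x => D₁ x)^[n] a = 0)
    (hln₂ : ∀ a : MvPolynomial (Fin 2) K, ∃ n : ℕ, (fun x => D₂ x)^[n] a = 0)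
    (hind : ∀ r₁ r₂ : MvPolynomial (Fin 2) K, r₁ • D₁ + r₂ • D₂ = 0 → r₁ = 0 ∧ r₂ = 0)
    (hcomm : ⁅D₁, D₂⁆ = 0) :
    ∃ a c : MvPolynomial (Fin 2) K,
      Algebra.adjoin K ({a, c} : Set (MvPolynomial (Fin 2) K)) = ⊤ ∧
      D₁ = jacDer a ∧ D₂ = jacDer c :=
  lnd_commuting_independent_general K D₁ D₂ hln₁ hln₂ hind hcomm
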